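/- Let M be a C¹ symmetric positive-definite matrix field on a compact convex domain Ω with differentiable-metric variation σ1, and let V ⊆ Ω be a finite asymmetric ε-net with respect to D^{LS} (i.e., a (ε,ε)-Delone set: an ε-cover and an asymmetric ε-packing). If σ1·ε ≤ 0.0584, then the Labelle/Shewchuk Voronoi diagram of V (regions taken with respect to D^{LS}) is orphan-free: for every v ∈ V, every connected component of R(v) contains v. -/

import Mathlib

open Matrix Set

attribute [local instance] Matrix.normedAddCommGroup Matrix.normedSpace

/-- The application of a matrix to a vector of Euclidean space. -/
noncomputable def mav {n : ℕ} (A : Matrix (Fin n) (Fin n) ℝ)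
    (x : EuclideanSpace ℝ (Fin n)) : EuclideanSpace ℝ (Fin n) :=
  Matrix.toEuclideanLin A x

/-- The spectral (operator) norm `ρ` of a matrix. -/
noncomputable def rho {n : ℕ} (A : Matrix (Fin n) (Fin n) ℝ) : ℝ :=
  ‖LinearMap.toContinuousLinearMap (Matrix.toEuclideanLin A)‖

/-- The smallest singular value `ρ_m` of an (invertible) matrix: `ρ_m(A) = ρ(A⁻¹)⁻¹`. -/
noncomputable def rhom {n : ℕ} (A : Matrix (Fin n) (Fin n) ℝ) : ℝ :=
  (rho A⁻¹)⁻¹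

/-- The Voronoi region of a site `v ∈ V` inside `Ω`, w.r.t. an asymmetric distance `D`. -/
def vorRegion {n : ℕ} (Ω V : Set (EuclideanSpace ℝ (Fin n)))
    (D : EuclideanSpace ℝ (Fin n) → EuclideanSpace ℝ (Fin n) → ℝ)
    (v : EuclideanSpace ℝ (Fin n)) : Set (EuclideanSpace ℝ (Fin n)) :=
  {p ∈ Ω | ∀ w ∈ V, D p v ≤ D p w}

/-- The set of ratios whose supremum is the worst-case metric variation `σ0`. -/
def sigma0Set {n : ℕ} (Ω : Set (EuclideanSpace ℝ (Fin n)))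
    (M : EuclideanSpace ℝ (Fin n) → Matrix (Fin n) (Fin n) ℝ) : Set ℝ :=
  {x | ∃ a ∈ Ω, ∃ b ∈ Ω, a ≠ b ∧
    x = rho (M b * (M a)⁻¹ - 1) / ‖mav (M a) (a - b)‖}

/-- The set of ratios whose supremum is the differentiable-metric variation `σ1`
(the directional derivative of `M` at `p` in direction `r` is `fderivWithin ℝ M Ω p r`). -/
noncomputable def sigma1Set {n : ℕ} (Ω : Set (EuclideanSpace ℝ (Fin n)))
    (M : EuclideanSpace ℝ (Fin n) → Matrix (Fin n) (Fin n) ℝ) : Set ℝ :=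
  {x | ∃ p ∈ Ω, ∃ r : EuclideanSpace ℝ (Fin n), ‖r‖ = 1 ∧
    x = rho ((fderivWithin ℝ M Ω p r) * (M p)⁻¹) / ‖mav (M p) r‖}

/-!
Every point `p` of the region `R(v)` sees `v` along the segment `[v, p]`, so `R(v)` is star-shaped
about `v`. Integrating the variation bound `σ₁` along segments (a Riccati-type bootstrap followed
by Grönwall) shows that the metrics at two points with `σ₁ D(a, b) ≤ 1/8` agree up to a factor
`exp (5/4 σ₁ D(a, b))`. For `q` on `[p, v]` one then compares `D(q, v)` with `D(q, w)` in the
Euclidean structure of `M p`: the packing keeps every other site `w` at `M p`-distance at least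
`4/5 ε` from `v`, and Stewart's theorem turns this into a margin that absorbs the two changes of
metric `p → q → p` as long as `σ₁ ε ≤ 0.0584`.
-/

open Real

theorem exp_one_fifth_le : exp (1 / 5) ≤ 5 / 4 := by
  have := exp_bound_div_one_sub_of_interval (x := 1 / 5) (by norm_num) (by norm_num)
  norm_num at this ⊢
  linarith

theorem exp_div_three_le {τ : ℝ} (hτ : τ ∈ Icc (0 : ℝ) 1) : exp (τ / 3) ≤ 1 + τ / 2 := by
  have h3 : exp (1 / 3) ≤ 3 / 2 := by
    have := exp_bound_div_one_sub_of_interval (x := 1 / 3) (by norm_num) (by norm_num)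
    norm_num at this ⊢
    linarith
  have hconv := convexOn_exp.2 (mem_univ 0) (mem_univ (1 / 3)) (sub_nonneg.2 hτ.2) hτ.1
    (sub_add_cancel 1 τ)
  simp only [smul_eq_mul, mul_zero, zero_add, exp_zero, mul_one] at hconv
  rw [show τ / 3 = τ * (1 / 3) by ring]
  nlinarith [hτ.1]

theorem norm_le_of_norm_deriv_le_mul_sq {E : Type*} [NormedAddCommGroup E] [NormedSpace ℝ E]
    {f f' : ℝ → E} {σ : ℝ} (hf : ContinuousOn f (Icc 0 1))
    (hf' : ∀ s ∈ Ico (0 : ℝ) 1, HasDerivWithinAt f (f' s) (Ici s) s)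
    (hbound : ∀ s ∈ Ico (0 : ℝ) 1, ‖f' s‖ ≤ σ * ‖f s‖ ^ 2) (h0 : f 0 ≠ 0)
    (hsmall : σ * ‖f 0‖ ≤ 1 / 8) :
    ∀ s ∈ Icc (0 : ℝ) 1, ‖f s‖ ≤ 5 / 4 * ‖f 0‖ := by
  have hf0 : 0 < ‖f 0‖ := norm_pos_iff.2 h0
  have hexp : ∀ s ∈ Icc (0 : ℝ) 1, exp (s / 5) ≤ 5 / 4 := fun s hs =>
    (exp_le_exp.2 (by linarith [hs.2])).trans exp_one_fifth_le
  -- the barrier `‖f 0‖ * exp (s / 5)` is never reached, since `σ * ‖f s‖ < 1 / 5` below it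
  have hbarrier : ∀ s ∈ Icc (0 : ℝ) 1, ‖f s‖ ≤ ‖f 0‖ * exp (s / 5) := by
    have hderiv : ∀ s : ℝ, HasDerivAt (fun s => ‖f 0‖ * exp (s / 5))
        (‖f 0‖ * exp (s / 5) / 5) s := fun s =>
      ((((hasDerivAt_id' s).div_const 5).exp).const_mul ‖f 0‖).congr_deriv (by ring)
    refine image_norm_le_of_norm_deriv_right_lt_deriv_boundary hf hf' (by simp) hderiv
      fun s hs hfs => ?_
    have hB : σ * (‖f 0‖ * exp (s / 5)) ≤ 5 / 32 := by
      rw [← mul_assoc]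
      nlinarith [hexp s (Ico_subset_Icc_self hs), exp_pos (s / 5)]
    have hBpos : 0 < ‖f 0‖ * exp (s / 5) := by positivity
    calc ‖f' s‖ ≤ σ * ‖f s‖ ^ 2 := hbound s hs
      _ = σ * (‖f 0‖ * exp (s / 5)) * (‖f 0‖ * exp (s / 5)) := by rw [hfs]; ring
      _ < ‖f 0‖ * exp (s / 5) / 5 := by nlinarith
  intro s hs
  calc ‖f s‖ ≤ ‖f 0‖ * exp (s / 5) := hbarrier s hs
    _ ≤ 5 / 4 * ‖f 0‖ := by nlinarith [hexp s hs]

theorem sq_add_mul_sq_le_norm_sub_smul_sq {F : Type*} [NormedAddCommGroup F]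
    [InnerProductSpace ℝ F] {x y : F} {τ : ℝ} (hτ : τ ∈ Icc (0 : ℝ) 1) (hyx : ‖y‖ ≤ ‖x‖) :
    ((1 - τ) * ‖y‖) ^ 2 + τ * ‖x - y‖ ^ 2 ≤ ‖x - τ • y‖ ^ 2 := by
  have hstewart :
      ‖x - τ • y‖ ^ 2 = (1 - τ) * ‖x‖ ^ 2 + τ * ‖x - y‖ ^ 2 - τ * (1 - τ) * ‖y‖ ^ 2 := by
    rw [norm_sub_sq_real, norm_sub_sq_real, real_inner_smul_right, norm_smul, Real.norm_eq_abs,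
      abs_of_nonneg hτ.1]
    ring
  have hsq : ‖y‖ ^ 2 ≤ ‖x‖ ^ 2 := by gcongr
  nlinarith [mul_le_mul_of_nonneg_left hsq (sub_nonneg.2 hτ.2)]

section MetricField

variable {n : ℕ}

@[simp] theorem mav_zero (A : Matrix (Fin n) (Fin n) ℝ) : mav A 0 = 0 := map_zero _

@[simp] theorem mav_add (A : Matrix (Fin n) (Fin n) ℝ) (x y : EuclideanSpace ℝ (Fin n)) :
    mav A (x + y) = mav A x + mav A y := map_add _ x y

@[simp] theorem mav_sub (A : Matrix (Fin n) (Fin n) ℝ) (x y : EuclideanSpace ℝ (Fin n)) :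
    mav A (x - y) = mav A x - mav A y := map_sub _ x y

@[simp] theorem mav_smul (A : Matrix (Fin n) (Fin n) ℝ) (c : ℝ) (x : EuclideanSpace ℝ (Fin n)) :
    mav A (c • x) = c • mav A x := map_smul _ c x

theorem mav_mul (A B : Matrix (Fin n) (Fin n) ℝ) (x : EuclideanSpace ℝ (Fin n)) :
    mav (A * B) x = mav A (mav B x) := by
  simp [mav, Matrix.toLpLin_apply, Matrix.mulVec_mulVec]

theorem norm_mav_sub_comm (A : Matrix (Fin n) (Fin n) ℝ) (x y : EuclideanSpace ℝ (Fin n)) :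
    ‖mav A (x - y)‖ = ‖mav A (y - x)‖ := by
  rw [mav_sub, mav_sub, norm_sub_rev]

theorem norm_mav_le (A : Matrix (Fin n) (Fin n) ℝ) (x : EuclideanSpace ℝ (Fin n)) :
    ‖mav A x‖ ≤ rho A * ‖x‖ :=
  (LinearMap.toContinuousLinearMap (Matrix.toEuclideanLin A)).le_opNorm x

theorem rho_smul (c : ℝ) (A : Matrix (Fin n) (Fin n) ℝ) : rho (c • A) = |c| * rho A := by
  simp [rho, norm_smul]

theorem norm_mav_pos {A : Matrix (Fin n) (Fin n) ℝ} (hA : A.PosDef)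
    {x : EuclideanSpace ℝ (Fin n)} (hx : x ≠ 0) : 0 < ‖mav A x‖ := by
  refine norm_pos_iff.2 fun h => hx ?_
  have hinj := Matrix.mulVec_injective_iff_isUnit.2 hA.isUnit
  have h' : A *ᵥ x.ofLp = A *ᵥ 0 := by simpa [mav, Matrix.toLpLin_apply] using h
  simpa using hinj h'

/-- The consequence of a bound `σ` on the metric variation that the orphan-freeness argument
uses: nearby metrics `M a`, `M b` are comparable up to a factor `exp (5/4 σ D(a, b))`. -/
def LocalMetricComparison (Ω : Set (EuclideanSpace ℝ (Fin n)))
    (M : EuclideanSpace ℝ (Fin n) → Matrix (Fin n) (Fin n) ℝ) (σ : ℝ) : Prop :=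
  ∀ a ∈ Ω, ∀ b ∈ Ω, σ * ‖mav (M a) (a - b)‖ ≤ 1 / 8 →
    ∀ x, ‖mav (M b) x‖ ≤ exp (5 / 4 * (σ * ‖mav (M a) (a - b)‖)) * ‖mav (M a) x‖

variable {Ω : Set (EuclideanSpace ℝ (Fin n))}
  {M : EuclideanSpace ℝ (Fin n) → Matrix (Fin n) (Fin n) ℝ} {σ : ℝ}

theorem norm_mav_fderivWithin_le (hσ : σ ∈ upperBounds (sigma1Set Ω M))
    {q : EuclideanSpace ℝ (Fin n)} (hq : q ∈ Ω) (hpd : (M q).PosDef)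
    (r x : EuclideanSpace ℝ (Fin n)) :
    ‖mav (fderivWithin ℝ M Ω q r) x‖ ≤ σ * ‖mav (M q) r‖ * ‖mav (M q) x‖ := by
  have hrho : rho (fderivWithin ℝ M Ω q r * (M q)⁻¹) ≤ σ * ‖mav (M q) r‖ := by
    rcases eq_or_ne r 0 with rfl | hr
    · simp [rho, mav]
    have hunit := hσ ⟨q, hq, ‖r‖⁻¹ • r, norm_smul_inv_norm hr, rfl⟩
    rwa [map_smul, smul_mul_assoc, rho_smul, mav_smul, norm_smul, Real.norm_eq_abs,
      mul_div_mul_left _ _ (by simpa using hr), div_le_iff₀ (norm_mav_pos hpd hr)] at hunit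
  have hinv : (M q)⁻¹ * M q = 1 :=
    Matrix.nonsing_inv_mul _ ((Matrix.isUnit_iff_isUnit_det _).1 hpd.isUnit)
  calc ‖mav (fderivWithin ℝ M Ω q r) x‖
      = ‖mav (fderivWithin ℝ M Ω q r * (M q)⁻¹) (mav (M q) x)‖ := by
        rw [← mav_mul, mul_assoc, hinv, mul_one]
    _ ≤ rho (fderivWithin ℝ M Ω q r * (M q)⁻¹) * ‖mav (M q) x‖ := norm_mav_le _ _
    _ ≤ σ * ‖mav (M q) r‖ * ‖mav (M q) x‖ := by gcongr

theorem hasDerivWithinAt_mav_segment (hΩ : Convex ℝ Ω) (hM : DifferentiableOn ℝ M Ω)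
    {a b : EuclideanSpace ℝ (Fin n)} (ha : a ∈ Ω) (hb : b ∈ Ω) (x : EuclideanSpace ℝ (Fin n))
    {s : ℝ} (hs : s ∈ Icc (0 : ℝ) 1) :
    HasDerivWithinAt (fun s : ℝ => mav (M (a + s • (b - a))) x)
      (mav (fderivWithin ℝ M Ω (a + s • (b - a)) (b - a)) x) (Icc 0 1) s := by
  have hmaps : MapsTo (fun s : ℝ => a + s • (b - a)) (Icc 0 1) Ω := fun s hs =>
    hΩ.add_smul_sub_mem ha hb hs
  have hline : HasDerivAt (fun s : ℝ => a + s • (b - a)) (b - a) s := by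
    simpa using ((hasDerivAt_id s).smul_const (b - a)).const_add a
  have hMline := (hM _ (hmaps hs)).hasFDerivWithinAt.comp_hasDerivWithinAt s
    hline.hasDerivWithinAt hmaps
  let applyAt : Matrix (Fin n) (Fin n) ℝ →L[ℝ] EuclideanSpace ℝ (Fin n) :=
    LinearMap.toContinuousLinearMap (LinearMap.applyₗ x ∘ₗ Matrix.toEuclideanLin.toLinearMap)
  exact applyAt.hasFDerivAt.comp_hasDerivWithinAt s hMline

theorem localMetricComparison_of_norm_fderivWithin_le (hΩ : Convex ℝ Ω)
    (hM : DifferentiableOn ℝ M Ω) (hpd : ∀ p ∈ Ω, (M p).PosDef) (hσ : 0 ≤ σ)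
    (hvar : ∀ q ∈ Ω, ∀ r x, ‖mav (fderivWithin ℝ M Ω q r) x‖ ≤
      σ * ‖mav (M q) r‖ * ‖mav (M q) x‖) :
    LocalMetricComparison Ω M σ := by
  intro a ha b hb hsmall x
  rw [norm_mav_sub_comm] at hsmall ⊢
  rcases eq_or_ne b a with rfl | hba
  · simp
  have hγ : ∀ s ∈ Icc (0 : ℝ) 1, a + s • (b - a) ∈ Ω := fun s hs =>
    hΩ.add_smul_sub_mem ha hb hs
  have hcont : ∀ y, ContinuousOn (fun s : ℝ => mav (M (a + s • (b - a))) y) (Icc 0 1) :=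
    fun y s hs => (hasDerivWithinAt_mav_segment hΩ hM ha hb y hs).continuousWithinAt
  have hderiv : ∀ y, ∀ s ∈ Ico (0 : ℝ) 1,
      HasDerivWithinAt (fun s : ℝ => mav (M (a + s • (b - a))) y)
        (mav (fderivWithin ℝ M Ω (a + s • (b - a)) (b - a)) y) (Ici s) s := fun y s hs =>
    (hasDerivWithinAt_mav_segment hΩ hM ha hb y (Ico_subset_Icc_self hs)).mono_of_mem_nhdsWithin
      (Icc_mem_nhdsGE_of_mem hs)
  have hspeed : ∀ s ∈ Icc (0 : ℝ) 1,
      ‖mav (M (a + s • (b - a))) (b - a)‖ ≤ 5 / 4 * ‖mav (M a) (b - a)‖ := by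
    have h := norm_le_of_norm_deriv_le_mul_sq (σ := σ) (hcont (b - a)) (hderiv (b - a))
      (fun s hs => ?_) ?_ ?_
    · simpa using h
    · simpa [sq, mul_assoc] using hvar _ (hγ s (Ico_subset_Icc_self hs)) (b - a) (b - a)
    · simpa using (norm_mav_pos (hpd a ha) (sub_ne_zero.2 hba)).ne'
    · simpa using hsmall
  have hrate : ∀ s ∈ Ico (0 : ℝ) 1, ‖mav (fderivWithin ℝ M Ω (a + s • (b - a)) (b - a)) x‖ ≤
      5 / 4 * (σ * ‖mav (M a) (b - a)‖) * ‖mav (M (a + s • (b - a))) x‖ + 0 := fun s hs =>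
    calc ‖mav (fderivWithin ℝ M Ω (a + s • (b - a)) (b - a)) x‖
        ≤ σ * ‖mav (M (a + s • (b - a))) (b - a)‖ * ‖mav (M (a + s • (b - a))) x‖ :=
          hvar _ (hγ s (Ico_subset_Icc_self hs)) _ _
      _ ≤ σ * (5 / 4 * ‖mav (M a) (b - a)‖) * ‖mav (M (a + s • (b - a))) x‖ := by
          gcongr; exact hspeed s (Ico_subset_Icc_self hs)
      _ = _ := by ring
  simpa [gronwallBound_ε0, mul_comm] using norm_le_gronwallBound_of_norm_deriv_right_le
    (hcont x) (hderiv x) (by simp) hrate 1 ⟨zero_le_one, le_rfl⟩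

namespace LocalMetricComparison

variable {ε : ℝ} {p v w : EuclideanSpace ℝ (Fin n)}

theorem norm_mav_le_five_div_four_mul (hcomp : LocalMetricComparison Ω M σ)
    {a b : EuclideanSpace ℝ (Fin n)} (ha : a ∈ Ω) (hb : b ∈ Ω)
    (hsmall : σ * ‖mav (M a) (a - b)‖ ≤ 1 / 8) (x : EuclideanSpace ℝ (Fin n)) :
    ‖mav (M b) x‖ ≤ 5 / 4 * ‖mav (M a) x‖ :=
  (hcomp a ha b hb hsmall x).trans <| mul_le_mul_of_nonneg_right
    ((exp_le_exp.2 (by linarith)).trans exp_one_fifth_le) (norm_nonneg _)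

theorem le_norm_mav_sub (hcomp : LocalMetricComparison Ω M σ) (hσ : 0 ≤ σ)
    (hσε : σ * ε ≤ 0.0584) (hp : p ∈ Ω) (hv : v ∈ Ω) (hw : w ∈ Ω)
    (hpv : ‖mav (M p) (p - v)‖ ≤ ε)
    (hpack : ε ≤ ‖mav (M v) (v - w)‖ ∨ ε ≤ ‖mav (M w) (w - v)‖) :
    4 / 5 * ε ≤ ‖mav (M p) (v - w)‖ := by
  have hσpv : σ * ‖mav (M p) (p - v)‖ ≤ σ * ε := by gcongr
  rcases hpack with hvw | hwv
  · have := hcomp.norm_mav_le_five_div_four_mul hp hv (by linarith) (v - w)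
    linarith
  by_contra! hlt
  have htri : ‖mav (M p) (p - w)‖ ≤ ‖mav (M p) (p - v)‖ + ‖mav (M p) (v - w)‖ := by
    rw [← sub_add_sub_cancel p v w, mav_add]
    exact norm_add_le _ _
  have hσpw : σ * ‖mav (M p) (p - w)‖ ≤ σ * (9 / 5 * ε) := by gcongr; linarith
  have := hcomp.norm_mav_le_five_div_four_mul hp hw (by linarith) (v - w)
  rw [norm_mav_sub_comm] at hwv
  linarith

theorem norm_mav_sub_le_of_add_smul_sub (hcomp : LocalMetricComparison Ω M σ) (hσ : 0 ≤ σ)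
    {τ : ℝ} (hτ : τ ∈ Icc (0 : ℝ) 1) (hp : p ∈ Ω) (hq : p + τ • (v - p) ∈ Ω)
    (hσd : σ * ‖mav (M p) (p - v)‖ ≤ 0.0584)
    (hvw : ‖mav (M p) (p - v)‖ ≤ ‖mav (M p) (p - w)‖)
    (hsep : ‖mav (M p) (p - v)‖ ≤ 5 / 4 * ‖mav (M p) (v - w)‖) :
    ‖mav (M (p + τ • (v - p))) (p + τ • (v - p) - v)‖ ≤
      ‖mav (M (p + τ • (v - p))) (p + τ • (v - p) - w)‖ := by
  set q := p + τ • (v - p)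
  set d := ‖mav (M p) (p - v)‖
  have hd : 0 ≤ d := norm_nonneg _
  have hσd₀ : 0 ≤ σ * d := mul_nonneg hσ hd
  have hpq : ‖mav (M p) (p - q)‖ = τ * d := by
    rw [show p - q = τ • (p - v) by simp only [q]; module, mav_smul, norm_smul,
      Real.norm_eq_abs, abs_of_nonneg hτ.1]
  have hσpq : σ * ‖mav (M p) (p - q)‖ ≤ 1 / 8 := by rw [hpq]; nlinarith [hτ.2]
  set E₁ := exp (5 / 4 * (σ * ‖mav (M p) (p - q)‖))
  have hqp : ‖mav (M q) (q - p)‖ ≤ 5 / 4 * (τ * d) := by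
    rw [← hpq, norm_mav_sub_comm (M p)]
    exact hcomp.norm_mav_le_five_div_four_mul hp hq hσpq _
  have hσqp : σ * ‖mav (M q) (q - p)‖ ≤ 1 / 8 := by nlinarith [hτ.2]
  set E₂ := exp (5 / 4 * (σ * ‖mav (M q) (q - p)‖))
  have hX : ‖mav (M q) (q - v)‖ ≤ E₁ * ((1 - τ) * d) := by
    have hqv : q - v = (1 - τ) • (p - v) := by simp only [q]; module
    calc ‖mav (M q) (q - v)‖ ≤ E₁ * ‖mav (M p) (q - v)‖ := hcomp p hp q hq hσpq (q - v)
      _ = E₁ * ((1 - τ) * d) := by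
        rw [hqv, mav_smul, norm_smul, Real.norm_eq_abs, abs_of_nonneg (sub_nonneg.2 hτ.2)]
  have hG : ‖mav (M p) (q - w)‖ ≤ E₂ * ‖mav (M q) (q - w)‖ := hcomp q hq p hp hσqp (q - w)
  have hstewart :
      ((1 - τ) * d) ^ 2 + τ * ‖mav (M p) (v - w)‖ ^ 2 ≤ ‖mav (M p) (q - w)‖ ^ 2 := by
    have h := sq_add_mul_sq_le_norm_sub_smul_sq hτ hvw
    rwa [← mav_sub, ← mav_smul, ← mav_sub, sub_sub_sub_cancel_left,
      show p - w - τ • (p - v) = q - w by simp only [q]; module] at h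
  have hE : (E₁ * E₂) ^ 2 ≤ 1 + τ / 2 := by
    rw [← exp_add, sq, ← exp_add]
    refine (exp_le_exp.2 ?_).trans (exp_div_three_le hτ)
    rw [hpq]
    nlinarith [mul_le_mul_of_nonneg_left hqp hσ, hτ.1]
  have hE₂ : 0 < E₂ := exp_pos _
  have hkey : E₁ * E₂ * ((1 - τ) * d) ≤ ‖mav (M p) (q - w)‖ := by
    refine le_of_pow_le_pow_left₀ two_ne_zero (norm_nonneg _) ?_
    have hτd : ((1 - τ) * d) ^ 2 ≤ d ^ 2 := by
      gcongr
      · exact mul_nonneg (sub_nonneg.2 hτ.2) hd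
      · nlinarith [hτ.1]
    calc (E₁ * E₂ * ((1 - τ) * d)) ^ 2 = (E₁ * E₂) ^ 2 * ((1 - τ) * d) ^ 2 := by ring
      _ ≤ (1 + τ / 2) * ((1 - τ) * d) ^ 2 := by gcongr
      _ ≤ ((1 - τ) * d) ^ 2 + τ * ‖mav (M p) (v - w)‖ ^ 2 := by
        nlinarith [mul_le_mul_of_nonneg_left hτd hτ.1, hτ.1,
          pow_le_pow_left₀ hd hsep 2]
      _ ≤ ‖mav (M p) (q - w)‖ ^ 2 := hstewart
  refine hX.trans (le_of_mul_le_mul_left ?_ hE₂)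
  linarith

theorem segment_subset_vorRegion {V : Set (EuclideanSpace ℝ (Fin n))}
    (hcomp : LocalMetricComparison Ω M σ) (hσ : 0 ≤ σ) (hΩ : Convex ℝ Ω) (hVΩ : V ⊆ Ω)
    (hcover : ∀ p ∈ Ω, ∃ v ∈ V, ‖mav (M p) (p - v)‖ ≤ ε)
    (hpack : ∀ v ∈ V, ∀ w ∈ V, v ≠ w →
      ε ≤ ‖mav (M v) (v - w)‖ ∨ ε ≤ ‖mav (M w) (w - v)‖)
    (hσε : σ * ε ≤ 0.0584) (hv : v ∈ V)
    (hp : p ∈ vorRegion Ω V (fun a b => ‖mav (M a) (a - b)‖) v) :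
    segment ℝ v p ⊆ vorRegion Ω V (fun a b => ‖mav (M a) (a - b)‖) v := by
  obtain ⟨hpΩ, hpmin⟩ := hp
  have hpv : ‖mav (M p) (p - v)‖ ≤ ε := by
    obtain ⟨u, hu, hpu⟩ := hcover p hpΩ
    exact (hpmin u hu).trans hpu
  rw [segment_symm, segment_eq_image']
  rintro _ ⟨τ, hτ, rfl⟩
  have hq := hΩ.add_smul_sub_mem hpΩ (hVΩ hv) hτ
  refine ⟨hq, fun w hw => ?_⟩
  rcases eq_or_ne v w with rfl | hvw
  · exact le_rfl
  have hsep := hcomp.le_norm_mav_sub hσ hσε hpΩ (hVΩ hv) (hVΩ hw) hpv (hpack v hv w hw hvw)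
  exact hcomp.norm_mav_sub_le_of_add_smul_sub hσ hτ hpΩ hq
    ((mul_le_mul_of_nonneg_left hpv hσ).trans hσε) (hpmin w hw) (by linarith)

end LocalMetricComparison

end MetricField

theorem stmt13_general {n : ℕ} (Ω : Set (EuclideanSpace ℝ (Fin n)))
    (hΩconv : Convex ℝ Ω)
    (M : EuclideanSpace ℝ (Fin n) → Matrix (Fin n) (Fin n) ℝ)
    (hMc1 : ContDiffOn ℝ 1 M Ω) (hMpd : ∀ p ∈ Ω, (M p).PosDef)
    (V : Set (EuclideanSpace ℝ (Fin n))) (hVsub : V ⊆ Ω)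
    (ε σ1 : ℝ) (hσ1 : IsLUB (sigma1Set Ω M) σ1)
    (hcover : ∀ p ∈ Ω, ∃ v ∈ V, ‖mav (M p) (p - v)‖ ≤ ε)
    (hpack : ∀ v ∈ V, ∀ w ∈ V, v ≠ w →
      ε ≤ ‖mav (M v) (v - w)‖ ∨ ε ≤ ‖mav (M w) (w - v)‖)
    (hcond : σ1 * ε ≤ 0.0584) :
    ∀ v ∈ V, ∀ p ∈ vorRegion Ω V (fun a b => ‖mav (M a) (a - b)‖) v,
      v ∈ connectedComponentIn (vorRegion Ω V (fun a b => ‖mav (M a) (a - b)‖) v) p := by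
  intro v hv p hp
  rcases eq_or_ne p v with rfl | hpv
  · exact mem_connectedComponentIn hp
  have hσ : 0 ≤ σ1 := (div_nonneg (norm_nonneg _) (norm_nonneg _)).trans
    (hσ1.1 ⟨p, hp.1, _, norm_smul_inv_norm (𝕜 := ℝ) (sub_ne_zero.2 hpv), rfl⟩)
  have hcomp := localMetricComparison_of_norm_fderivWithin_le hΩconv
    (hMc1.differentiableOn one_ne_zero) hMpd hσ fun q hq =>
      norm_mav_fderivWithin_le hσ1.1 hq (hMpd q hq)
  exact (convex_segment v p).isPreconnected.subset_connectedComponentIn (right_mem_segment ℝ v p)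
    (hcomp.segment_subset_vorRegion hσ hΩconv hVsub hcover hpack hcond hv hp)
    (left_mem_segment ℝ v p)

theorem stmt13 {n : ℕ} (Ω : Set (EuclideanSpace ℝ (Fin n)))
    (hΩc : IsCompact Ω) (hΩconv : Convex ℝ Ω)
    (M : EuclideanSpace ℝ (Fin n) → Matrix (Fin n) (Fin n) ℝ)
    (hMc1 : ContDiffOn ℝ 1 M Ω) (hMpd : ∀ p ∈ Ω, (M p).PosDef)
    (V : Set (EuclideanSpace ℝ (Fin n))) (hVfin : V.Finite) (hVsub : V ⊆ Ω)
    (ε σ1 : ℝ) (hσ1 : IsLUB (sigma1Set Ω M) σ1)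
    (hcover : ∀ p ∈ Ω, ∃ v ∈ V, ‖mav (M p) (p - v)‖ ≤ ε)
    (hpack : ∀ v ∈ V, ∀ w ∈ V, v ≠ w →
      ε ≤ ‖mav (M v) (v - w)‖ ∨ ε ≤ ‖mav (M w) (w - v)‖)
    (hcond : σ1 * ε ≤ 0.0584) :
    ∀ v ∈ V, ∀ p ∈ vorRegion Ω V (fun a b => ‖mav (M a) (a - b)‖) v,
      v ∈ connectedComponentIn (vorRegion Ω V (fun a b => ‖mav (M a) (a - b)‖) v) p :=
  stmt13_general Ω hΩconv M hMc1 hMpd V hVsub ε σ1 hσ1 hcover hpack hcond
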